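/- (Napier's rules) Suppose U, V, W are nonzero vectors with a_U, a_V, a_W all nonzero, with the projective quadrances q_u = q(V,W), q_v = q(U,W), q_w = q(U,V) all nonzero, and with all three quantities a_U·a_V − b_{UV}², a_U·a_W − b_{UW}², a_V·a_W − b_{VW}² nonzero. If the projective spread S_w equals 1 and S_u·S_v ≠ 0, then q_u = (S_u + S_v − 1)/S_v, q_v = (S_u + S_v − 1)/S_u, and q_w = (S_u + S_v − 1)/(S_u·S_v). -/
import Mathlib

/-- The projective quadrance between the projective points `[U]` and `[V]`. -/
def projQuadrance {F : Type*} [Field F] {M : Type*} [AddCommGroup M] [Module F M]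
    (B : LinearMap.BilinForm F M) (U V : M) : F :=
  1 - (B U V) ^ 2 / (B U U * B V V)

/-- The projective spread between the projective lines `WU` and `WV`
(the spread at the vertex `[W]`). -/
def projSpread {F : Type*} [Field F] {M : Type*} [AddCommGroup M] [Module F M]
    (B : LinearMap.BilinForm F M) (W U V : M) : F :=
  1 - (B W W * B U V - B U W * B V W) ^ 2 /
      ((B U U * B W W - (B U W) ^ 2) * (B V V * B W W - (B V W) ^ 2))

set_option maxHeartbeats 4000000 in
theorem napier_rules
    {F : Type*} [Field F] (hchar : (2 : F) ≠ 0)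
    {M : Type*} [AddCommGroup M] [Module F M]
    (B : LinearMap.BilinForm F M) (hsym : ∀ x y : M, B x y = B y x)
    (U V W : M) (hU : U ≠ 0) (hV : V ≠ 0) (hW : W ≠ 0)
    (haU : B U U ≠ 0) (haV : B V V ≠ 0) (haW : B W W ≠ 0)
    (hqu : projQuadrance B V W ≠ 0) (hqv : projQuadrance B U W ≠ 0)
    (hqw : projQuadrance B U V ≠ 0)
    (hdUV : B U U * B V V - (B U V) ^ 2 ≠ 0)
    (hdUW : B U U * B W W - (B U W) ^ 2 ≠ 0)
    (hdVW : B V V * B W W - (B V W) ^ 2 ≠ 0)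
    (hSw : projSpread B W U V = 1)
    (hSuSv : projSpread B U V W * projSpread B V U W ≠ 0) :
    projQuadrance B V W =
        (projSpread B U V W + projSpread B V U W - 1) / projSpread B V U W ∧
      projQuadrance B U W =
        (projSpread B U V W + projSpread B V U W - 1) / projSpread B U V W ∧
      projQuadrance B U V =
        (projSpread B U V W + projSpread B V U W - 1) /
          (projSpread B U V W * projSpread B V U W) := by
  simp only [projQuadrance, projSpread, hsym V U, hsym W U, hsym W V] at *
  set a := B U U with ha'
  set b := B V V with hb'
  set c := B W W with hc'
  set p := B U V with hp'
  set q := B U W with hq'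
  set r := B V W with hr'
  obtain ⟨hSu, hSv⟩ := mul_ne_zero_iff.mp hSuSv
  have hkey : c * p = q * r := by
    have h1 : (c * p - q * r) ^ 2 / ((a * c - q ^ 2) * (b * c - r ^ 2)) = 0 := by
      linear_combination -hSw
    have h2 : (c * p - q * r) ^ 2 = 0 := by
      rcases div_eq_zero_iff.mp h1 with h | h
      · exact h
      · exact absurd h (mul_ne_zero hdUW hdVW)
    have h3 := pow_eq_zero_iff (n := 2) (by norm_num) |>.mp h2
    linear_combination h3
  have hd1 : b * a - p ^ 2 ≠ 0 := by rw [mul_comm]; exact hdUV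
  have hd2 : c * a - q ^ 2 ≠ 0 := by rw [mul_comm]; exact hdUW
  have hd3 : c * b - r ^ 2 ≠ 0 := by rw [mul_comm]; exact hdVW
  have hD12 : (b * a - p ^ 2) * (c * a - q ^ 2) ≠ 0 := mul_ne_zero hd1 hd2
  have hD13 : (a * b - p ^ 2) * (c * b - r ^ 2) ≠ 0 := mul_ne_zero hdUV hd3
  have eSu : 1 - (a * r - p * q) ^ 2 / ((b * a - p ^ 2) * (c * a - q ^ 2)) =
      ((b * a - p ^ 2) * (c * a - q ^ 2) - (a * r - p * q) ^ 2) /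
        ((b * a - p ^ 2) * (c * a - q ^ 2)) := by
    rw [sub_div, div_self hD12]
  have eSv : 1 - (b * q - p * r) ^ 2 / ((a * b - p ^ 2) * (c * b - r ^ 2)) =
      ((a * b - p ^ 2) * (c * b - r ^ 2) - (b * q - p * r) ^ 2) /
        ((a * b - p ^ 2) * (c * b - r ^ 2)) := by
    rw [sub_div, div_self hD13]
  have equ : 1 - r ^ 2 / (b * c) = (b * c - r ^ 2) / (b * c) := by
    rw [sub_div, div_self (mul_ne_zero haV haW)]
  have eqv : 1 - q ^ 2 / (a * c) = (a * c - q ^ 2) / (a * c) := by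
    rw [sub_div, div_self (mul_ne_zero haU haW)]
  have eqw : 1 - p ^ 2 / (a * b) = (a * b - p ^ 2) / (a * b) := by
    rw [sub_div, div_self (mul_ne_zero haU haV)]
  refine ⟨?_, ?_, ?_⟩
  · rw [eq_div_iff hSv, equ, eSu, eSv, div_mul_div_comm,
      div_add_div _ _ hD12 hD13, div_sub_one (mul_ne_zero hD12 hD13),
      div_eq_div_iff (mul_ne_zero (mul_ne_zero haV haW) hD13) (mul_ne_zero hD12 hD13)]
    linear_combination (2*b*p^5*q^2*r^4 - 1*b^2*p^4*q^3*r^3 - 3*b^2*c*p^5*q^2*r^2 + b^3*c*p^4*q^3*r + b^3*c^2*p^5*q^2 - 1*a*b*p^4*q*r^5 - 1*a*b*c*p^5*r^4 - 4*a*b^2*p^3*q^2*r^4 + 3*a*b^2*c*p^4*q*r^3 + a*b^2*c^2*p^5*r^2 + 2*a*b^3*p^2*q^3*r^3 + 6*a*b^3*c*p^3*q^2*r^2 - 2*a*b^3*c^2*p^4*q*r - 2*a*b^4*c*p^2*q^3*r - 2*a*b^4*c^2*p^3*q^2 + 2*a^2*b^2*p^2*q*r^5 + 2*a^2*b^2*c*p^3*r^4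 + 2*a^2*b^3*p*q^2*r^4 - 6*a^2*b^3*c*p^2*q*r^3 - 2*a^2*b^3*c^2*p^3*r^2 - 1*a^2*b^4*q^3*r^3 - 3*a^2*b^4*c*p*q^2*r^2 + 4*a^2*b^4*c^2*p^2*q*r + a^2*b^5*c*q^3*r + a^2*b^5*c^2*p*q^2 - 1*a^3*b^3*q*r^5 - 1*a^3*b^3*c*p*r^4 + 3*a^3*b^4*c*q*r^3 + a^3*b^4*c^2*p*r^2 - 2*a^3*b^5*c^2*q*r) * hkey
  · rw [eq_div_iff hSu, eqv, eSu, eSv, div_mul_div_comm,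
      div_add_div _ _ hD12 hD13, div_sub_one (mul_ne_zero hD12 hD13),
      div_eq_div_iff (mul_ne_zero (mul_ne_zero haU haW) hD12) (mul_ne_zero hD12 hD13)]
    linear_combination (2*a*p^5*q^4*r^2 - 1*a*b*p^4*q^5*r - 1*a*b*c*p^5*q^4 - 1*a^2*p^4*q^3*r^3 - 3*a^2*c*p^5*q^2*r^2 - 4*a^2*b*p^3*q^4*r^2 + 3*a^2*b*c*p^4*q^3*r + a^2*b*c^2*p^5*q^2 + 2*a^2*b^2*p^2*q^5*r + 2*a^2*b^2*c*p^3*q^4 + a^3*c*p^4*q*r^3 + a^3*c^2*p^5*r^2 + 2*a^3*b*p^2*q^3*r^3 + 6*a^3*b*c*p^3*q^2*r^2 - 2*a^3*b*c^2*p^4*q*r + 2*a^3*b^2*p*q^4*r^2 - 6*a^3*b^2*c*p^2*q^3*r - 2*a^3*b^2*c^2*p^3*q^2 - 1*a^3*b^3*q^5*r - 1*a^3*b^3*c*p*q^4 - 2*a^4*b*c*p^2*q*r^3 - 2*a^4*b*c^2*p^3*r^2 - 1*a^4*b^2*q^3*r^3 - 3*a^4*b^2*c*p*q^2*r^2 +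 4*a^4*b^2*c^2*p^2*q*r + 3*a^4*b^3*c*q^3*r + a^4*b^3*c^2*p*q^2 + a^5*b^2*c*q*r^3 + a^5*b^2*c^2*p*r^2 - 2*a^5*b^3*c^2*q*r) * hkey
  · rw [eq_div_iff (mul_ne_zero hSu hSv), eqw, eSu, eSv, div_mul_div_comm,
      div_mul_div_comm, div_add_div _ _ hD12 hD13, div_sub_one (mul_ne_zero hD12 hD13),
      div_eq_div_iff (mul_ne_zero (mul_ne_zero haU haV) (mul_ne_zero hD12 hD13))
        (mul_ne_zero hD12 hD13)]
    linear_combination (3*a*b*p^8*q^3*r^3 - 1*a*b*c*p^9*q^2*r^2 - 2*a*b^2*p^7*q^4*r^2 - 3*a*b^2*c*p^8*q^3*r + a*b^2*c^2*p^9*q^2 + 2*a*b^3*c*p^7*q^4 - 2*a^2*b*p^7*q^2*r^4 - 3*a^2*b*c*p^8*q*r^3 + a^2*b*c^2*p^9*r^2 - 8*a^2*b^2*p^6*q^3*r^3 + 8*a^2*b^2*c*p^7*q^2*r^2 + 3*a^2*b^2*c^2*p^8*q*r - 1*a^2*b^2*c^3*p^9 + 6*a^2*b^3*p^5*q^4*r^2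 + 8*a^2*b^3*c*p^6*q^3*r - 6*a^2*b^3*c^2*p^7*q^2 - 6*a^2*b^4*c*p^5*q^4 + 2*a^3*b*c*p^7*r^4 + 6*a^3*b^2*p^5*q^2*r^4 + 8*a^3*b^2*c*p^6*q*r^3 - 6*a^3*b^2*c^2*p^7*r^2 + 6*a^3*b^3*p^4*q^3*r^3 - 18*a^3*b^3*c*p^5*q^2*r^2 - 8*a^3*b^3*c^2*p^6*q*r + 4*a^3*b^3*c^3*p^7 - 6*a^3*b^4*p^3*q^4*r^2 - 6*a^3*b^4*c*p^4*q^3*r + 12*a^3*b^4*c^2*p^5*q^2 + 6*a^3*b^5*c*p^3*q^4 - 6*a^4*b^2*c*p^5*r^4 - 6*a^4*b^3*p^3*q^2*r^4 - 6*a^4*b^3*c*p^4*q*r^3 + 12*a^4*b^3*c^2*p^5*r^2 + 16*a^4*b^4*c*p^3*q^2*r^2 + 6*a^4*b^4*c^2*p^4*q*r - 6*a^4*b^4*c^3*p^5 + 2*a^4*b^5*p*q^4*r^2 - 10*a^4*b^5*c^2*p^3*q^2 - 2*a^4*b^6*c*p*q^4 + 6*a^5*b^3*c*p^3*r^4 +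 2*a^5*b^4*p*q^2*r^4 - 10*a^5*b^4*c^2*p^3*r^2 - 1*a^5*b^5*q^3*r^3 - 5*a^5*b^5*c*p*q^2*r^2 + 4*a^5*b^5*c^3*p^3 + a^5*b^6*c*q^3*r + 3*a^5*b^6*c^2*p*q^2 - 2*a^6*b^4*c*p*r^4 + a^6*b^5*c*q*r^3 + 3*a^6*b^5*c^2*p*r^2 - 1*a^6*b^6*c^2*q*r - 1*a^6*b^6*c^3*p) * hkey
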